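/- arXiv:math/0212369 — 8 statements merged into one kernel-verified Lean document; each statement's English description precedes it below -/
import Mathlib

section
/- Let 𝔄 be an associative algebra over ℂ and F : 𝔄 → ℂ a linear functional. For all α, β ∈ ℂ, if a ∈ Stab_F(α) and b ∈ Stab_F(β), then ab ∈ Stab_F(αβ). -/
/-- `Stab_F(α) = {a : ∀ x, F(ax) = α F(xa)}` -/
def stab {A : Type*} [NonUnitalRing A] [Module ℂ A]
    [SMulCommClass ℂ A A] [IsScalarTower ℂ A A]
    (F : Module.Dual ℂ A) (α : ℂ) : Submodule ℂ A where
  carrier := {a | ∀ x : A, F (a * x) = α * F (x * a)}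
  add_mem' := by
    intro a b ha hb x
    simp only [add_mul, mul_add, map_add]
    linear_combination ha x + hb x
  zero_mem' := by intro x; simp
  smul_mem' := by
    intro c a ha x
    simp only [smul_mul_assoc, mul_smul_comm, map_smul, smul_eq_mul]
    linear_combination c * ha x

/-- For an associative algebra `𝔄` over `ℂ` with a linear functional `F`,
if `a ∈ Stab_F(α)` and `b ∈ Stab_F(β)` then `a * b ∈ Stab_F(α * β)`. -/
theorem stmt2 {A : Type*} [NonUnitalRing A] [Module ℂ A]
    [SMulCommClass ℂ A A] [IsScalarTower ℂ A A]
    (F : Module.Dual ℂ A) (α β : ℂ) (a b : A)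
    (ha : a ∈ stab F α) (hb : b ∈ stab F β) :
    a * b ∈ stab F (α * β) := by
  intro x
  calc F (a * b * x) = F (a * (b * x)) := by rw [mul_assoc]
    _ = α * F (b * x * a) := ha (b * x)
    _ = α * F (b * (x * a)) := by rw [mul_assoc]
    _ = α * (β * F (x * a * b)) := by rw [hb (x * a)]
    _ = α * β * F (x * (a * b)) := by rw [mul_assoc x a b]; ring
end

section
/- Let 𝔄 be a finite-dimensional associative algebra over ℂ and F : 𝔄 → ℂ a linear functional. For every nonzero α ∈ ℂ, dim Stab_F(α) = dim Stab_F(α⁻¹). -/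
open LinearMap Module

lemma finrank_ker_flip {K V : Type*} [Field K] [AddCommGroup V] [Module K V]
    [FiniteDimensional K V] (B : V →ₗ[K] V →ₗ[K] K) :
    finrank K (ker B) = finrank K (ker B.flip) := by
  have h1 : finrank K (range B.flip) = finrank K (V ⧸ ker B) := by
    rw [← dualAnnihilator_ker_eq_range_flip]
    rw [← (Submodule.dualQuotEquivDualAnnihilator (ker B)).finrank_eq]
    exact Subspace.dual_finrank_eq
  have h2 := (ker B).finrank_quotient_add_finrank
  have h3 := (ker B.flip).finrank_quotient_add_finrank
  have h4 := LinearMap.finrank_range_add_finrank_ker B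
  have h5 := LinearMap.finrank_range_add_finrank_ker B.flip
  omega

/-- For a finite-dimensional associative algebra `𝔄` over `ℂ`, a linear
functional `F`, and any nonzero `α : ℂ`, `dim Stab_F(α) = dim Stab_F(α⁻¹)`. -/
theorem stmt4 {A : Type*} [NonUnitalRing A] [Module ℂ A]
    [SMulCommClass ℂ A A] [IsScalarTower ℂ A A] [FiniteDimensional ℂ A]
    (F : Module.Dual ℂ A) (α : ℂ) (hα : α ≠ 0) :
    Module.finrank ℂ ↥(stab F α) = Module.finrank ℂ ↥(stab F α⁻¹) := by
  set B : A →ₗ[ℂ] A →ₗ[ℂ] ℂ := LinearMap.mk₂ ℂ (fun a x => F (a * x) - α * F (x * a))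
    (by intro a b x; simp [add_mul, mul_add]; ring)
    (by intro c a x; simp [smul_mul_assoc, mul_smul_comm, smul_sub, smul_eq_mul]; ring)
    (by intro a x y; simp [add_mul, mul_add]; ring)
    (by intro c a x; simp [smul_mul_assoc, mul_smul_comm, smul_sub, smul_eq_mul]; ring)
    with hB
  have e1 : stab F α = ker B := by
    ext a
    simp only [stab, Submodule.mem_mk, AddSubmonoid.mem_mk, AddSubsemigroup.mem_mk,
      Set.mem_setOf_eq, LinearMap.mem_ker, hB]
    constructor
    · intro h; ext x; simp [h x]
    · intro h x
      have := congrFun (congrArg DFunLike.coe h) x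
      simp only [mk₂_apply, LinearMap.zero_apply] at this
      linear_combination this
  have e2 : stab F α⁻¹ = ker B.flip := by
    ext a
    simp only [stab, Submodule.mem_mk, AddSubmonoid.mem_mk, AddSubsemigroup.mem_mk,
      Set.mem_setOf_eq, LinearMap.mem_ker, hB]
    constructor
    · intro h; ext x
      simp only [flip_apply, mk₂_apply, LinearMap.zero_apply]
      have := h x
      field_simp at this
      linear_combination -this
    · intro h x
      have := congrFun (congrArg DFunLike.coe h) x
      simp only [flip_apply, mk₂_apply, LinearMap.zero_apply] at this
      field_simp
      linear_combination -this
  rw [e1, e2]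
  exact finrank_ker_flip B
end

section
/- Let 𝔄 be a finite-dimensional associative algebra over ℂ and F ∈ 𝔄* a linear functional such that dim Stab_F(1) ≤ dim Stab_G(1) for all G ∈ 𝔄*. Then Stab_F(1) is a commutative subalgebra of 𝔄: for all x, y ∈ Stab_F(1), x y = y x (and x y ∈ Stab_F(1)). -/
/-- `Stab_F(1) = {a : ∀ x, F(ax) = F(xa)}` -/
def stabOne {A : Type*} [NonUnitalRing A] [Module ℂ A]
    [SMulCommClass ℂ A A] [IsScalarTower ℂ A A]
    (F : Module.Dual ℂ A) : Submodule ℂ A where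
  carrier := {a | ∀ x : A, F (a * x) = F (x * a)}
  add_mem' := by
    intro a b ha hb x
    simp only [add_mul, mul_add, map_add, ha x, hb x]
  zero_mem' := by intro x; simp
  smul_mem' := by
    intro c a ha x
    simp only [smul_mul_assoc, mul_smul_comm, map_smul, ha x]

/-!
For a functional `G`, `(a, b) ↦ G (a * b - b * a)` is an alternating form with kernel `Stab_G(1)`,
depending linearly on `G`. Let `B + t • C` be a pencil of alternating forms whose kernel has minimal
dimension at `t = 0`, and suppose `C x y ≠ 0` for some `x, y ∈ ker B`. With `W` a complement of
`ker B`, the Gram determinant of `B + t • C` on `W ⊕ ⟨x, y⟩` is `t²` times a polynomial whose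
constant term is `det (B|_W) * C(x, y)² ≠ 0`, so for some `t` that form is nondegenerate on a space
of dimension `dim W + 2`, and its kernel is smaller than `ker B`. Hence every `G` kills
`x * y - y * x` for `x, y ∈ Stab_F(1)`, i.e. `x` and `y` commute.
-/

open Module Polynomial

namespace LinearMap.BilinForm

variable {K V : Type*} [Field K] [AddCommGroup V] [Module K V]

def gram {ι : Type*} (B : LinearMap.BilinForm K V) (v : ι → V) : Matrix ι ι K :=
  Matrix.of fun i j => B (v i) (v j)

@[simp]
lemma gram_apply {ι : Type*} (B : LinearMap.BilinForm K V) (v : ι → V) (i j : ι) :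
    B.gram v i j = B (v i) (v j) := rfl

lemma finrank_ker_add_card_le_of_det_gram_ne_zero [FiniteDimensional K V] {ι : Type*}
    [Fintype ι] [DecidableEq ι] (B : LinearMap.BilinForm K V) {v : ι → V}
    (hv : (B.gram v).det ≠ 0) :
    finrank K (LinearMap.ker B) + Fintype.card ι ≤ finrank K V := by
  have hker : ∀ a : ι → K, ∑ i, a i • v i ∈ LinearMap.ker B → a = 0 := by
    intro a ha
    by_contra hne
    refine hv (Matrix.exists_vecMul_eq_zero_iff.mp ⟨a, hne, funext fun j => ?_⟩)
    have := LinearMap.congr_fun (LinearMap.mem_ker.mp ha) (v j)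
    simpa [Matrix.vecMul, dotProduct] using this
  have hli : LinearIndependent K v := Fintype.linearIndependent_iff.mpr fun a ha =>
    congrFun (hker a (ha ▸ zero_mem _))
  have hdisj : Disjoint (LinearMap.ker B) (Submodule.span K (Set.range v)) := by
    rw [Submodule.disjoint_def]
    intro u hu hspan
    obtain ⟨a, rfl⟩ := (Submodule.mem_span_range_iff_exists_fun K).mp hspan
    rw [hker a hu]
    simp
  calc finrank K (LinearMap.ker B) + Fintype.card ι
      = finrank K (LinearMap.ker B) + finrank K (Submodule.span K (Set.range v)) := by
        rw [finrank_span_eq_card hli]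
    _ ≤ finrank K V := Submodule.finrank_add_finrank_le_of_disjoint hdisj

lemma exists_det_gram_ne_zero [FiniteDimensional K V] {B : LinearMap.BilinForm K V}
    (hB : B.IsRefl) : ∃ (m : ℕ) (u : Fin m → V),
      finrank K (LinearMap.ker B) + m = finrank K V ∧ (B.gram u).det ≠ 0 := by
  obtain ⟨W, hW⟩ := Submodule.exists_isCompl (LinearMap.ker B)
  let b := finBasis K W
  refine ⟨_, fun i => b i, Submodule.finrank_add_eq_of_isCompl hW, ?_⟩
  have hdisj : Disjoint W (B.orthogonal W) := by
    rw [Submodule.disjoint_def]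
    intro w hwW hworth
    refine Submodule.disjoint_def.mp hW.disjoint w ?_ hwW
    ext z
    obtain ⟨k, hk, u, hu, rfl⟩ :=
      Submodule.mem_sup.mp (hW.sup_eq_top ▸ Submodule.mem_top : z ∈ LinearMap.ker B ⊔ W)
    rw [map_add, hB k w (LinearMap.congr_fun (LinearMap.mem_ker.mp hk) w), hB u w (hworth u hu)]
    simp
  have hgram : B.gram (fun i => (b i : V)) = BilinForm.toMatrix b (B.restrict W) := by
    ext i j
    simp [BilinForm.toMatrix_apply]
  rw [hgram, ← nondegenerate_iff_det_ne_zero]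
  exact B.nondegenerate_restrict_of_disjoint_orthogonal hB hdisj

lemma exists_det_gram_add_smul_ne_zero [Infinite K] {ι κ : Type*} [Fintype ι] [Fintype κ]
    [DecidableEq ι] [DecidableEq κ] {B C : LinearMap.BilinForm K V} (hB : B.IsRefl)
    {u : ι → V} {w : κ → V} (hwB : ∀ k, w k ∈ LinearMap.ker B)
    (hu : (B.gram u).det ≠ 0) (hw : (C.gram w).det ≠ 0) :
    ∃ t : K, ((B + t • C).gram (Sum.elim u w)).det ≠ 0 := by
  set s := Sum.elim u w
  have hB_left (k : κ) (z : V) : B (w k) z = 0 := LinearMap.congr_fun (hwB k) z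
  have hB_right (k : κ) (z : V) : B z (w k) = 0 := hB _ _ (hB_left k z)
  -- Dividing the `κ`-columns of the Gram matrix of `B + t • C` by `t` gives `t • M₁ + M₀`, and
  -- `M₀` is block triangular with diagonal blocks `B.gram u` and `C.gram w`.
  let M₁ : Matrix (ι ⊕ κ) (ι ⊕ κ) K :=
    Matrix.of fun i j => Sum.elim (fun _ => 1) (fun _ => 0) j * C (s i) (s j)
  let M₀ : Matrix (ι ⊕ κ) (ι ⊕ κ) K :=
    Matrix.of fun i j => B (s i) (s j) + Sum.elim (fun _ => 0) (fun _ => 1) j * C (s i) (s j)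
  have hM₀ : M₀.det = (B.gram u).det * (C.gram w).det := by
    have h₂₁ : M₀.toBlocks₂₁ = 0 := by ext; simp [M₀, s, Matrix.toBlocks₂₁, hB_left]
    have h₁₁ : M₀.toBlocks₁₁ = B.gram u := by ext; simp [M₀, s, Matrix.toBlocks₁₁]
    have h₂₂ : M₀.toBlocks₂₂ = C.gram w := by ext; simp [M₀, s, Matrix.toBlocks₂₂, hB_left]
    rw [← Matrix.fromBlocks_toBlocks M₀, h₂₁, Matrix.det_fromBlocks_zero₂₁, h₁₁, h₂₂]
  let p : K[X] := Matrix.det ((X : K[X]) • M₁.map Polynomial.C + M₀.map Polynomial.C)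
  have hp : p ≠ 0 := by
    have hp₀ : p.coeff 0 ≠ 0 := by
      rw [coeff_det_X_add_C_zero, hM₀]
      exact mul_ne_zero hu hw
    exact fun h => hp₀ (by rw [h, coeff_zero])
  obtain ⟨t, ht⟩ : ∃ t, (X * p).eval t ≠ 0 := by
    by_contra! h
    exact mul_ne_zero X_ne_zero hp (Polynomial.funext (by simpa using h))
  rw [eval_mul, eval_X] at ht
  have hfac : (B + t • C).gram s =
      (t • M₁ + M₀) * Matrix.diagonal (Sum.elim (fun _ => 1) fun _ => t) := by
    ext i (j | j) <;> simp [M₁, M₀, Matrix.mul_diagonal, s, hB_right, add_comm, mul_comm]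
  have hp_eval : p.eval t = (t • M₁ + M₀).det := by
    rw [← Polynomial.coe_evalRingHom, RingHom.map_det]
    congr 1
    ext
    simp [-X_mul_C]
  refine ⟨t, ?_⟩
  rw [hfac, Matrix.det_mul, Matrix.det_diagonal, ← hp_eval, Fintype.prod_sum_type]
  simp only [Sum.elim_inl, Sum.elim_inr, Finset.prod_const_one, Finset.prod_const, one_mul]
  exact mul_ne_zero (right_ne_zero_of_mul ht) (pow_ne_zero _ (left_ne_zero_of_mul ht))

lemma IsAlt.det_gram_pair {C : LinearMap.BilinForm K V} (hC : C.IsAlt) (x y : V) :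
    (C.gram ![x, y]).det = C x y ^ 2 := by
  simp [Matrix.det_fin_two, hC.self_eq_zero, ← hC.neg_eq x y, sq]

theorem IsAlt.apply_eq_zero_of_mem_ker_of_forall_finrank_ker_le [FiniteDimensional K V]
    [Infinite K] {B C : LinearMap.BilinForm K V} (hB : B.IsAlt) (hC : C.IsAlt)
    (hmin : ∀ t : K, finrank K (LinearMap.ker B) ≤ finrank K (LinearMap.ker (B + t • C)))
    {x y : V} (hx : x ∈ LinearMap.ker B) (hy : y ∈ LinearMap.ker B) : C x y = 0 := by
  by_contra hxy
  obtain ⟨m, u, hm, hu⟩ := exists_det_gram_ne_zero hB.isRefl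
  have hxy_ker : ∀ k, ![x, y] k ∈ LinearMap.ker B := by simpa [Fin.forall_fin_two] using ⟨hx, hy⟩
  have hC_xy : (C.gram ![x, y]).det ≠ 0 := by
    rw [hC.det_gram_pair]
    exact pow_ne_zero 2 hxy
  obtain ⟨t, ht⟩ := exists_det_gram_add_smul_ne_zero hB.isRefl hxy_ker hu hC_xy
  have hle := finrank_ker_add_card_le_of_det_gram_ne_zero _ ht
  have hmin_t := hmin t
  simp only [Fintype.card_sum, Fintype.card_fin] at hle
  omega

end LinearMap.BilinForm

section CommForm

variable {R A : Type*} [CommRing R] [NonUnitalRing A] [Module R A] [SMulCommClass R A A]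
  [IsScalarTower R A A]

def commForm (G : Module.Dual R A) : LinearMap.BilinForm R A :=
  (LinearMap.mul R A - (LinearMap.mul R A).flip).compr₂ G

@[simp]
lemma commForm_apply (G : Module.Dual R A) (a b : A) : commForm G a b = G (a * b - b * a) := rfl

lemma commForm_isAlt (G : Module.Dual R A) : (commForm G).IsAlt := fun a => by simp

lemma commForm_add_smul (F G : Module.Dual R A) (t : R) :
    commForm (F + t • G) = commForm F + t • commForm G := by
  ext; simp

end CommForm

section Stab

variable {A : Type*} [NonUnitalRing A] [Module ℂ A] [SMulCommClass ℂ A A] [IsScalarTower ℂ A A]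

lemma stabOne_eq_ker_commForm (G : Module.Dual ℂ A) : stabOne G = LinearMap.ker (commForm G) := by
  ext a
  simp [stabOne, LinearMap.ext_iff, sub_eq_zero]

lemma mul_mem_stabOne {G : Module.Dual ℂ A} {x y : A} (hx : x ∈ stabOne G) (hy : y ∈ stabOne G) :
    x * y ∈ stabOne G := fun z => by
  rw [mul_assoc, hx, mul_assoc, hy, mul_assoc]

end Stab

/-- If `F` minimizes `dim Stab_G(1)` over all `G ∈ 𝔄*`, then `Stab_F(1)`
is a commutative subalgebra of `𝔄`: products of its elements commute and stay in it. -/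
theorem stmt11 {A : Type*} [NonUnitalRing A] [Module ℂ A]
    [SMulCommClass ℂ A A] [IsScalarTower ℂ A A] [FiniteDimensional ℂ A]
    (F : Module.Dual ℂ A)
    (hmin : ∀ G : Module.Dual ℂ A,
      Module.finrank ℂ ↥(stabOne F) ≤ Module.finrank ℂ ↥(stabOne G)) :
    ∀ x ∈ stabOne F, ∀ y ∈ stabOne F, x * y = y * x ∧ x * y ∈ stabOne F := by
  intro x hx y hy
  refine ⟨?_, mul_mem_stabOne hx hy⟩
  rw [← sub_eq_zero, ← Module.forall_dual_apply_eq_zero_iff ℂ]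
  intro G
  have hmin' (t : ℂ) : finrank ℂ (LinearMap.ker (commForm F)) ≤
      finrank ℂ (LinearMap.ker (commForm F + t • commForm G)) := by
    rw [← commForm_add_smul, ← stabOne_eq_ker_commForm, ← stabOne_eq_ker_commForm]
    exact hmin (F + t • G)
  rw [stabOne_eq_ker_commForm] at hx hy
  simpa using (commForm_isAlt F).apply_eq_zero_of_mem_ker_of_forall_finrank_ker_le
    (commForm_isAlt G) hmin' hx hy
end

section
/- Let 𝔄 be a finite-dimensional associative algebra over ℂ and F ∈ 𝔄* a linear functional such that dim Stab_F(0) ≤ dim Stab_G(0) for all G ∈ 𝔄*. Then Stab_F(0)·Stab_F(∞) = {0}; in particular, Nil_F is a subalgebra of 𝔄 with identically zero multiplication. -/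
/-- `Stab_F(0) = {a : ∀ x, F(ax) = 0}` -/
def stabZero {A : Type*} [NonUnitalRing A] [Module ℂ A]
    [SMulCommClass ℂ A A] [IsScalarTower ℂ A A]
    (F : Module.Dual ℂ A) : Submodule ℂ A where
  carrier := {a | ∀ x : A, F (a * x) = 0}
  add_mem' := by
    intro a b ha hb x
    simp [add_mul, ha x, hb x]
  zero_mem' := by intro x; simp
  smul_mem' := by
    intro c a ha x
    simp [smul_mul_assoc, ha x]

/-- `Stab_F(∞) = {a : ∀ x, F(xa) = 0}` -/
def stabInf {A : Type*} [NonUnitalRing A] [Module ℂ A]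
    [SMulCommClass ℂ A A] [IsScalarTower ℂ A A]
    (F : Module.Dual ℂ A) : Submodule ℂ A where
  carrier := {a | ∀ x : A, F (x * a) = 0}
  add_mem' := by
    intro a b ha hb x
    simp [mul_add, ha x, hb x]
  zero_mem' := by intro x; simp
  smul_mem' := by
    intro c a ha x
    simp [mul_smul_comm, ha x]

/-!
The map `ψ_G : a ↦ G(a · _)` from `𝔄` to `𝔄*` has kernel `Stab_G(0)` and depends linearly on
`G`, so minimality of `dim Stab_F(0)` says that `ψ_F` has maximal rank in the pencil
`ψ_F + t ψ_H`. A maximal-rank member `T` of a pencil `T + t S` satisfies `S (ker T) ⊆ range T`: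
otherwise `range T` together with `S v`, `v ∈ ker T`, spans a space that survives, for generic `t`,
inside `range (T + t S)`. Hence for `a ∈ Stab_F(0)` and every `H` there is `c` with
`H(a x) = F(c x)` for all `x`; taking `x = b ∈ Stab_F(∞)` gives `H(ab) = 0` for all `H`.
-/

open Module LinearMap

section Pencil

variable {K V W : Type*} [Field K] [Infinite K] [AddCommGroup V] [Module K V]
  [AddCommGroup W] [Module K W]

theorem LinearMap.exists_ne_zero_injective_add_smul [FiniteDimensional K V]
    {C : V →ₗ[K] W} (hC : Function.Injective C) (D : V →ₗ[K] W) :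
    ∃ t : K, t ≠ 0 ∧ Function.Injective (C + t • D) := by
  obtain ⟨P, hP⟩ := C.exists_leftInverse_of_injective (ker_eq_bot.2 hC)
  -- with `P C = 1`, a kernel vector of `C - μ⁻¹ D` is an eigenvector of `P D` for `μ`
  obtain ⟨μ, hμ⟩ : ∃ μ : K, μ ∉ insert 0 {μ | Module.End.HasEigenvalue (P ∘ₗ D) μ} :=
    ((Module.End.finite_hasEigenvalue (P ∘ₗ D)).insert 0).infinite_compl.nonempty
  simp only [Set.mem_insert_iff, Set.mem_ofPred_eq, not_or] at hμ
  refine ⟨-μ⁻¹, by simpa using hμ.1, ?_⟩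
  rw [← ker_eq_bot, ker_eq_bot']
  intro x hx
  have hPC : P (C x) = x := congr($hP x)
  have heigen : (P ∘ₗ D) x = μ • x := by
    have h : x = μ⁻¹ • P (D x) := by
      simpa [hPC, ← sub_eq_add_neg, sub_eq_zero] using congr(P $hx)
    exact ((eq_inv_smul_iff₀ hμ.1).1 h).symm
  by_contra hx0
  exact hμ.2 (Module.End.hasEigenvalue_of_hasEigenvector
    (Module.End.hasEigenvector_iff.2 ⟨Module.End.mem_eigenspace_iff.2 heigen, hx0⟩))

theorem LinearMap.map_ker_le_range_of_finrank_range_add_smul_le [FiniteDimensional K W]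
    (T S : V →ₗ[K] W) (h : ∀ t : K, finrank K (range (T + t • S)) ≤ finrank K (range T)) :
    (ker T).map S ≤ range T := by
  rintro _ ⟨v, hv, rfl⟩
  by_contra hSv
  obtain ⟨R, hR⟩ := T.rangeRestrict.exists_rightInverse_of_surjective T.range_rangeRestrict
  have hTR (w : range T) : T (R w) = w := congr(Subtype.val ($hR w))
  -- `(w, a) ↦ w + a S v + t S (R w)` is injective for generic `t` and factors through `T + t S`
  let C : range T × K →ₗ[K] W := (range T).subtype.coprod (toSpanSingleton K W (S v))
  let D : range T × K →ₗ[K] W := S ∘ₗ R ∘ₗ fst K (range T) K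
  have hC : Function.Injective C := by
    rw [← ker_eq_bot, ker_eq_bot']
    rintro ⟨w, a⟩ hwa
    have hwa : (w : W) + a • S v = 0 := hwa
    obtain rfl : a = 0 := by
      by_contra ha
      refine hSv ⟨-a⁻¹ • R w, ?_⟩
      rw [map_smul, hTR, neg_smul, ← smul_neg, ← eq_neg_of_add_eq_zero_right hwa,
        inv_smul_smul₀ ha]
    simpa using hwa
  obtain ⟨t, ht, hinj⟩ := exists_ne_zero_injective_add_smul hC D
  have hle : range (C + t • D) ≤ range (T + t • S) := by
    rintro _ ⟨⟨w, a⟩, rfl⟩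
    refine ⟨R w + (a * t⁻¹) • v, ?_⟩
    simp only [add_apply, smul_apply, map_add, map_smul, hTR, mem_ker.1 hv, zero_add,
      coprod_apply, Submodule.subtype_apply, toSpanSingleton_apply, coe_comp, coe_fst,
      Function.comp_apply, C, D]
    rw [smul_smul, inv_mul_cancel_right₀ ht]
    abel
  have hrank := Submodule.finrank_mono hle
  rw [finrank_range_of_inj hinj, finrank_prod, finrank_self] at hrank
  have := h t
  omega

end Pencil

section MulLeftDual

variable {R A : Type*} [CommSemiring R] [NonUnitalNonAssocSemiring A] [Module R A]
  [SMulCommClass R A A] [IsScalarTower R A A]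

/-- `ψ_G : a ↦ G(a · _)`. -/
def mulLeftDual (G : Dual R A) : A →ₗ[R] Dual R A :=
  (LinearMap.mul R A).compr₂ G

@[simp]
lemma mulLeftDual_apply (G : Dual R A) (a x : A) : mulLeftDual G a x = G (a * x) := rfl

lemma mulLeftDual_add_smul (F H : Dual R A) (t : R) :
    mulLeftDual (F + t • H) = mulLeftDual F + t • mulLeftDual H := by
  ext
  simp

end MulLeftDual

section Minimal

variable {A : Type*} [NonUnitalRing A] [Module ℂ A] [SMulCommClass ℂ A A] [IsScalarTower ℂ A A]

lemma ker_mulLeftDual (G : Dual ℂ A) : ker (mulLeftDual G) = stabZero G := by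
  ext a
  exact mem_ker.trans LinearMap.ext_iff

variable [FiniteDimensional ℂ A] {F : Dual ℂ A}

lemma finrank_range_mulLeftDual_le_of_minimal
    (hmin : ∀ G : Dual ℂ A, finrank ℂ (stabZero F) ≤ finrank ℂ (stabZero G)) (G : Dual ℂ A) :
    finrank ℂ (range (mulLeftDual G)) ≤ finrank ℂ (range (mulLeftDual F)) := by
  have hF := finrank_range_add_finrank_ker (mulLeftDual F)
  have hG := finrank_range_add_finrank_ker (mulLeftDual G)
  rw [ker_mulLeftDual] at hF hG
  have := hmin G
  omega

lemma exists_mulLeftDual_eq_of_minimal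
    (hmin : ∀ G : Dual ℂ A, finrank ℂ (stabZero F) ≤ finrank ℂ (stabZero G))
    (H : Dual ℂ A) {a : A} (ha : a ∈ stabZero F) :
    ∃ c, mulLeftDual F c = mulLeftDual H a := by
  refine map_ker_le_range_of_finrank_range_add_smul_le _ _ (fun t => ?_) ⟨a, ?_, rfl⟩
  · rw [← mulLeftDual_add_smul]
    exact finrank_range_mulLeftDual_le_of_minimal hmin _
  · rwa [SetLike.mem_coe, ker_mulLeftDual]

lemma mul_eq_zero_of_minimal
    (hmin : ∀ G : Dual ℂ A, finrank ℂ (stabZero F) ≤ finrank ℂ (stabZero G))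
    {a b : A} (ha : a ∈ stabZero F) (hb : b ∈ stabInf F) :
    a * b = 0 := by
  refine (forall_dual_apply_eq_zero_iff ℂ (a * b)).1 fun H => ?_
  obtain ⟨c, hc⟩ := exists_mulLeftDual_eq_of_minimal hmin H ha
  rw [← mulLeftDual_apply, ← hc, mulLeftDual_apply]
  exact hb c

end Minimal

/-- If `F` minimizes `dim Stab_G(0)` over all `G ∈ 𝔄*`, then
`Stab_F(0) · Stab_F(∞) = {0}`; in particular `Nil_F = Stab_F(0) ⊓ Stab_F(∞)` is a
subalgebra with identically zero multiplication. -/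
theorem stmt12 {A : Type*} [NonUnitalRing A] [Module ℂ A]
    [SMulCommClass ℂ A A] [IsScalarTower ℂ A A] [FiniteDimensional ℂ A]
    (F : Module.Dual ℂ A)
    (hmin : ∀ G : Module.Dual ℂ A,
      Module.finrank ℂ ↥(stabZero F) ≤ Module.finrank ℂ ↥(stabZero G)) :
    (∀ a ∈ stabZero F, ∀ b ∈ stabInf F, a * b = 0) ∧
    (∀ a ∈ stabZero F ⊓ stabInf F, ∀ b ∈ stabZero F ⊓ stabInf F, a * b = 0) :=
  ⟨fun _ ha _ hb => mul_eq_zero_of_minimal hmin ha hb,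
    fun _ ha _ hb => mul_eq_zero_of_minimal hmin ha.1 hb.2⟩
end

section
/- Let 𝔄 be a finite-dimensional associative algebra over ℂ and F ∈ 𝔄* a linear functional. Define the symmetric bilinear form Q_F(a,b) := F(ab + ba). If the restriction of Q_F to the subspace Stab_F(1) is non-degenerate, then there exist λ, μ ∈ ℂ such that the bilinear form (x, y) ↦ λ F(x y) + μ F(y x) on 𝔄 is non-degenerate (i.e. the pair (𝔄, F) is of type 1). -/
/-- If the symmetric form `Q_F(a,b) = F(ab + ba)` restricted to
`Stab_F(1)` is non-degenerate, then there are `λ, μ ∈ ℂ` such that the bilinear form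
`(x, y) ↦ λ F(x y) + μ F(y x)` on `𝔄` is non-degenerate, i.e. `(𝔄, F)` is of type 1. -/
theorem stmt13 {A : Type*} [NonUnitalRing A] [Module ℂ A]
    [SMulCommClass ℂ A A] [IsScalarTower ℂ A A] [FiniteDimensional ℂ A]
    (F : Module.Dual ℂ A)
    (hQ : ∀ a ∈ stabOne F, (∀ b ∈ stabOne F, F (a * b + b * a) = 0) → a = 0) :
    ∃ l m : ℂ, ∀ v : A, (∀ w : A, l * F (v * w) + m * F (w * v) = 0) → v = 0 := by
  classical
  set n := Module.finrank ℂ A with hn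
  let b : Module.Basis (Fin n) ℂ A := Module.finBasis ℂ A
  let Ms : Matrix (Fin n) (Fin n) ℂ := Matrix.of fun i j => F (b i * b j) + F (b j * b i)
  let Mc : Matrix (Fin n) (Fin n) ℂ := Matrix.of fun i j => F (b i * b j) - F (b j * b i)
  let Mp : Matrix (Fin n) (Fin n) (Polynomial ℂ) :=
    Matrix.of fun i j => Polynomial.C (Ms i j) + Polynomial.X * Polynomial.C (Mc i j)
  have hL : ∀ (c : Fin n → ℂ) (x : A), F ((∑ i, c i • b i) * x) = ∑ i, c i * F (b i * x) := by
    intro c x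
    rw [Finset.sum_mul, map_sum]
    exact Finset.sum_congr rfl fun i _ => by rw [smul_mul_assoc, map_smul, smul_eq_mul]
  have hR : ∀ (c : Fin n → ℂ) (x : A), F (x * (∑ i, c i • b i)) = ∑ i, c i * F (x * b i) := by
    intro c x
    rw [Finset.mul_sum, map_sum]
    exact Finset.sum_congr rfl fun i _ => by rw [mul_smul_comm, map_smul, smul_eq_mul]
  by_cases hdet : Mp.det = 0
  · -- degenerate pencil: contradiction with hQ
    exfalso
    obtain ⟨v, hv0, hv⟩ := Matrix.exists_vecMul_eq_zero_iff.mpr hdet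
    set a : ℕ → A := fun k => ∑ i, (v i).coeff k • b i with ha
    have hvj : ∀ j, (∑ i, v i * Mp i j) = 0 := by
      intro j
      have := congrFun hv j
      simpa [Matrix.vecMul, dotProduct] using this
    have hA : ∀ (k : ℕ) (j : Fin n),
        (∑ i, (v i).coeff (k+1) * Ms i j) + (∑ i, (v i).coeff k * Mc i j) = 0 := by
      intro k j
      have h0 := congrArg (fun p => Polynomial.coeff p (k+1)) (hvj j)
      simpa [Mp, mul_add, ← mul_assoc, Polynomial.finset_sum_coeff, Polynomial.coeff_add,
        Polynomial.coeff_mul_C, Polynomial.coeff_mul_X, Finset.sum_add_distrib] using h0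
    have hB : ∀ (j : Fin n), (∑ i, (v i).coeff 0 * Ms i j) = 0 := by
      intro k
      have h0 := congrArg (fun p => Polynomial.coeff p 0) (hvj k)
      simpa [Mp, mul_add, ← mul_assoc, Polynomial.finset_sum_coeff, Polynomial.coeff_add,
        Polynomial.coeff_mul_C, Polynomial.mul_coeff_zero, Finset.sum_add_distrib] using h0
    have hSa : ∀ (k : ℕ) (j : Fin n),
        (∑ i, (v i).coeff k * Ms i j) = F (a k * b j) + F (b j * a k) := by
      intro k j
      rw [show a k = ∑ i, (v i).coeff k • b i from rfl, hL, hR, ← Finset.sum_add_distrib]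
      exact Finset.sum_congr rfl fun i _ => by simp only [Ms, Matrix.of_apply]; ring
    have hCa : ∀ (k : ℕ) (j : Fin n),
        (∑ i, (v i).coeff k * Mc i j) = F (a k * b j) - F (b j * a k) := by
      intro k j
      rw [show a k = ∑ i, (v i).coeff k • b i from rfl, hL, hR, ← Finset.sum_sub_distrib]
      exact Finset.sum_congr rfl fun i _ => by simp only [Mc, Matrix.of_apply]; ring
    have ext1 : ∀ (k : ℕ) (x : A),
        (F (a (k+1) * x) + F (x * a (k+1))) + (F (a k * x) - F (x * a k)) = 0 := by
      intro k
      have hmap : (F.comp (LinearMap.mulLeft ℂ (a (k+1))) + F.comp (LinearMap.mulRight ℂ (a (k+1)))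
          + (F.comp (LinearMap.mulLeft ℂ (a k)) - F.comp (LinearMap.mulRight ℂ (a k))))
          = (0 : A →ₗ[ℂ] ℂ) := by
        apply b.ext
        intro j
        have := hA k j
        rw [hSa, hCa] at this
        simpa using this
      intro x
      simpa using LinearMap.congr_fun hmap x
    have ext0 : ∀ (x : A), F (a 0 * x) + F (x * a 0) = 0 := by
      have hmap : (F.comp (LinearMap.mulLeft ℂ (a 0)) + F.comp (LinearMap.mulRight ℂ (a 0)))
          = (0 : A →ₗ[ℂ] ℂ) := by
        apply b.ext
        intro j
        have := hB j
        rw [hSa] at this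
        simpa using this
      intro x
      simpa using LinearMap.congr_fun hmap x
    -- the top nonzero coefficient
    set N : ℕ := Finset.univ.sup fun i => (v i).natDegree with hN
    have hvanish : ∀ k, N < k → a k = 0 := by
      intro k hk
      rw [hN] at hk
      apply Finset.sum_eq_zero
      intro i _
      rw [Polynomial.coeff_eq_zero_of_natDegree_lt
        (lt_of_le_of_lt (Finset.le_sup (f := fun i => (v i).natDegree) (Finset.mem_univ i)) hk), zero_smul]
    obtain ⟨k₀, hk₀⟩ : ∃ k, a k ≠ 0 := by
      obtain ⟨i, hi⟩ := Function.ne_iff.mp hv0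
      have : ∃ k, (v i).coeff k ≠ 0 := by
        by_contra hcon
        push_neg at hcon
        exact hi (Polynomial.ext fun k => by simpa using hcon k)
      obtain ⟨k, hk⟩ := this
      refine ⟨k, fun hak => hk ?_⟩
      exact (Fintype.linearIndependent_iff.mp b.linearIndependent) _ hak i
    have hk₀N : k₀ ≤ N := by
      by_contra hcon
      exact hk₀ (hvanish k₀ (by omega))
    set d : ℕ := Nat.findGreatest (fun k => a k ≠ 0) N with hd
    have had : a d ≠ 0 := Nat.findGreatest_spec (P := fun k => a k ≠ 0) hk₀N hk₀
    have htop : ∀ k, d < k → a k = 0 := by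
      intro k hk
      by_cases hkN : k ≤ N
      · by_contra hcon
        exact Nat.findGreatest_is_greatest (P := fun k => a k ≠ 0) hk hkN hcon
      · exact hvanish k (by omega)
    have hstab : a d ∈ stabOne F := by
      intro x
      have h := ext1 d x
      rw [htop (d+1) (by omega)] at h
      simp only [zero_mul, mul_zero, map_zero, add_zero, zero_add] at h
      exact sub_eq_zero.mp h
    have hSvan : ∀ w ∈ stabOne F, F (a d * w + w * a d) = 0 := by
      intro w hw
      rw [map_add]
      match hd' : d with
      | 0 => exact ext0 w
      | (e+1) =>
        have h := ext1 e w
        have hw' : F (w * a e) = F (a e * w) := hw (a e)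
        rw [hw', sub_self, add_zero] at h
        exact h
    exact had (hQ (a d) hstab hSvan)
  · -- nondegenerate at some t
    obtain ⟨t, ht⟩ : ∃ t : ℂ, Polynomial.eval t Mp.det ≠ 0 := by
      obtain ⟨t, ht⟩ := Infinite.exists_notMem_finset Mp.det.roots.toFinset
      exact ⟨t, fun h => ht (Multiset.mem_toFinset.mpr ((Polynomial.mem_roots hdet).mpr h))⟩
    refine ⟨1 + t, 1 - t, fun w hw => ?_⟩
    let Mt : Matrix (Fin n) (Fin n) ℂ := Mp.map (Polynomial.eval t)
    have hMt : Mt.det ≠ 0 := by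
      have : (Polynomial.evalRingHom t) Mp.det = Mt.det := by
        rw [RingHom.map_det]; rfl
      simpa [← this] using ht
    have hcv : Matrix.vecMul (fun i => b.repr w i) Mt = 0 := by
      funext j
      have hwsum : w = ∑ i, b.repr w i • b i := (b.sum_repr w).symm
      have h1 : F (w * b j) = ∑ i, b.repr w i * F (b i * b j) := by
        conv_lhs => rw [hwsum]
        exact hL _ _
      have h2 : F (b j * w) = ∑ i, b.repr w i * F (b j * b i) := by
        conv_lhs => rw [hwsum]
        exact hR _ _
      have key := hw (b j)
      rw [h1, h2] at key
      have : Matrix.vecMul (fun i => b.repr w i) Mt j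
          = (1 + t) * (∑ i, b.repr w i * F (b i * b j)) + (1 - t) * (∑ i, b.repr w i * F (b j * b i)) := by
        simp only [Matrix.vecMul, dotProduct, Mt, Mp, Ms, Mc, Matrix.map_apply,
          Matrix.of_apply, Polynomial.eval_add, Polynomial.eval_mul, Polynomial.eval_C,
          Polynomial.eval_X, Finset.mul_sum]
        rw [← Finset.sum_add_distrib]
        exact Finset.sum_congr rfl fun i _ => by ring
      rw [this, key]
      rfl
    have hcz : (fun i => b.repr w i) = 0 := by
      have hUnit : IsUnit Mt.det := isUnit_iff_ne_zero.mpr hMt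
      calc (fun i => b.repr w i) = Matrix.vecMul (fun i => b.repr w i) (Mt * Mt⁻¹) := by
            rw [Matrix.mul_nonsing_inv _ hUnit, Matrix.vecMul_one]
        _ = Matrix.vecMul (Matrix.vecMul (fun i => b.repr w i) Mt) Mt⁻¹ := by
            rw [Matrix.vecMul_vecMul]
        _ = 0 := by rw [hcv, Matrix.zero_vecMul]
    have : b.repr w = 0 := by
      ext i
      exact congrFun hcz i
    simpa using b.repr.map_eq_zero_iff.mp (by simpa using this)
end

section
/- Let 𝔄 be a finite-dimensional unital associative algebra over ℂ whose index equals 1, where ind 𝔄 := min over all linear functionals G ∈ 𝔄* of dim Stab_G(1). Then 𝔄 is of type 1: there exist a linear functional F ∈ 𝔄* and λ, μ ∈ ℂ such that the bilinear form (x, y) ↦ λ F(x y) + μ F(y x) on 𝔄 is non-degenerate. -/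
/-!
Write `B_F (x, y) = F (x y)`, so that `Stab_F(1)` is the kernel of `B_F - B_Fᵀ`. Starting from `G`
with `Stab_G(1) = ℂ 1`, a generic perturbation `F = G + c H` keeps `Stab_F(1) = ℂ 1` and achieves
`F 1 ≠ 0`. If `B_F - t B_Fᵀ` were degenerate for every `t`, this pencil would be singular, so it
would have a polynomial kernel vector `u(t)` with `u(1) ≠ 0`. From `B_F (u t, ·) = t B_F (·, u t)`
one gets `B_F (u t, u s) = t s B_F (u t, u s)`; hence the polynomial `B_F (u t, u t)` vanishes for
`t² ≠ 1`, so identically. But `u(1)` lies in `Stab_F(1) = ℂ 1`, and `F 1 ≠ 0` makes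
`B_F (u 1, u 1) ≠ 0`.
-/

open Polynomial Matrix

theorem Polynomial.exists_eq_pow_smul_and_eval_ne_zero {ι R : Type*} [Fintype ι] [CommRing R]
    [IsDomain R] {u : ι → R[X]} (hu : u ≠ 0) (a : R) :
    ∃ (m : ℕ) (w : ι → R[X]), u = (X - C a) ^ m • w ∧ (fun i => (w i).eval a) ≠ 0 := by
  classical
  obtain ⟨i₀, hi₀, hmin⟩ := (Finset.univ.filter fun i => u i ≠ 0).exists_min_image
    (fun i => rootMultiplicity a (u i)) (by simpa [Finset.Nonempty, funext_iff] using hu)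
  have hdvd : ∀ i, (X - C a) ^ rootMultiplicity a (u i₀) ∣ u i := by
    intro i
    by_cases hi : u i = 0
    · simp [hi]
    · exact (pow_dvd_pow _ (hmin i (by simpa using hi))).trans (pow_rootMultiplicity_dvd _ _)
  choose w hw using hdvd
  refine ⟨_, w, _root_.funext hw, fun h => ?_⟩
  have hroot : (X - C a) ∣ w i₀ := dvd_iff_isRoot.2 (congrFun h i₀)
  exact pow_rootMultiplicity_not_dvd (by simpa using hi₀) a
    (hw i₀ ▸ pow_succ (X - C a) _ ▸ mul_dvd_mul_left _ hroot)

theorem Matrix.exists_vecMul_eq_zero_and_eval_ne_zero {ι R : Type*} [Fintype ι] [DecidableEq ι]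
    [CommRing R] [IsDomain R] {M : Matrix ι ι R[X]} (hM : M.det = 0) (a : R) :
    ∃ u : ι → R[X], u ᵥ* M = 0 ∧ (fun i => (u i).eval a) ≠ 0 := by
  obtain ⟨u, hu0, hu⟩ := Matrix.exists_vecMul_eq_zero_iff.2 hM
  obtain ⟨m, w, rfl, hw⟩ := Polynomial.exists_eq_pow_smul_and_eval_ne_zero hu0 a
  rw [Matrix.smul_vecMul] at hu
  exact ⟨w, (smul_eq_zero.1 hu).resolve_left (pow_ne_zero _ (X_sub_C_ne_zero a)), hw⟩

namespace LinearMap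

variable {K V W : Type*} [Field K] [AddCommGroup V] [Module K V] [FiniteDimensional K V]
  [AddCommGroup W] [Module K W]

theorem eventually_injective_add_smul {f : V →ₗ[K] W} (hf : Function.Injective f)
    (g : V →ₗ[K] W) : ∀ᶠ c : K in Filter.cofinite, Function.Injective (f + c • g) := by
  obtain ⟨S, hS⟩ := f.exists_leftInverse_of_injective (ker_eq_bot.2 hf)
  -- a kernel vector of `f + c • g` is an eigenvector of `S ∘ g` for the eigenvalue `-c⁻¹`
  refine ((Module.End.finite_hasEigenvalue (S ∘ₗ g)).preimage
    (inv_injective.comp neg_injective).injOn).subset fun c hc => ?_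
  obtain ⟨z, hz, hz0⟩ : ∃ z, f z + c • g z = 0 ∧ z ≠ 0 := by
    simpa [← ker_eq_bot, Submodule.eq_bot_iff] using hc
  have hSz : z + c • S (g z) = 0 := by
    simpa [← LinearMap.comp_apply S f, hS] using congrArg S hz
  have hc0 : c ≠ 0 := by rintro rfl; simp_all
  refine Module.End.hasEigenvalue_of_hasEigenvector ⟨Module.End.mem_eigenspace_iff.2 ?_, hz0⟩
  rw [Function.comp_apply, comp_apply, eq_inv_smul_iff₀ (neg_ne_zero.2 hc0), neg_smul,
    neg_eq_iff_eq_neg, eq_neg_iff_add_eq_zero, add_comm, hSz]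

theorem eventually_ker_add_smul_eq {f g : V →ₗ[K] W} (h : ker f ≤ ker g) :
    ∀ᶠ c : K in Filter.cofinite, ker (f + c • g) = ker f := by
  have hf : Function.Injective ((ker f).liftQ f le_rfl) :=
    ker_eq_bot.1 (Submodule.ker_liftQ_eq_bot _ _ _ le_rfl)
  filter_upwards [eventually_injective_add_smul hf ((ker f).liftQ g h)] with c hc
  have : f + c • g = ((ker f).liftQ f le_rfl + c • (ker f).liftQ g h) ∘ₗ (ker f).mkQ := by
    ext; simp
  rw [this, ker_comp, ker_eq_bot.2 hc, Submodule.comap_bot, Submodule.ker_mkQ]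

end LinearMap

namespace LinearMap.BilinForm

variable {K V : Type*} [Field K] [AddCommGroup V] [Module K V]

theorem apply_eq_zero_of_eq_smul_flip {B : LinearMap.BilinForm K V} {v w : V} {t s : K}
    (hv : B v = t • B.flip v) (hw : B w = s • B.flip w) (hts : t * s ≠ 1) : B v w = 0 := by
  have hvw : B v w = t * B w v := by simpa using LinearMap.congr_fun hv w
  have hwv : B w v = s * B v w := by simpa using LinearMap.congr_fun hw v
  have h : (1 - t * s) * B v w = 0 := by linear_combination hvw + t * hwv
  exact (mul_eq_zero.1 h).resolve_left (sub_ne_zero.2 hts.symm)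

theorem apply_basis_equivFun_symm_eq_zero {ι : Type*} [Fintype ι] [DecidableEq ι]
    (b : Module.Basis ι K V) (B : LinearMap.BilinForm K V) {x : ι → K}
    (hx : x ᵥ* toMatrix b B = 0) : B (b.equivFun.symm x) = 0 := by
  ext w
  rw [← b.equivFun.symm_apply_apply w, ← dotProduct_toMatrix_mulVec, dotProduct_mulVec, hx,
    zero_dotProduct]
  rfl

theorem eval_dotProduct_toMatrix_mulVec {ι : Type*} [Fintype ι] [DecidableEq ι]
    (b : Module.Basis ι K V) (B : LinearMap.BilinForm K V) (u w : ι → K[X]) (t : K) :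
    (u ⬝ᵥ (toMatrix b B).map C *ᵥ w).eval t =
      B (b.equivFun.symm fun i => (u i).eval t) (b.equivFun.symm fun i => (w i).eval t) := by
  rw [← dotProduct_toMatrix_mulVec, ← coe_evalRingHom, RingHom.map_dotProduct]
  congr 1
  ext i
  rw [Function.comp_apply, RingHom.map_mulVec, Matrix.map_map]
  simp [Function.comp_def]

theorem exists_separatingLeft_sub_smul_flip [Infinite K] [FiniteDimensional K V]
    (B : LinearMap.BilinForm K V) {e : V} (hsymm : LinearMap.ker (B - B.flip) ≤ K ∙ e)
    (he : B e e ≠ 0) : ∃ t : K, (B - t • B.flip).SeparatingLeft := by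
  classical
  by_contra! hdeg
  let b := Module.finBasis K V
  let Q := toMatrix b B
  let P : Matrix _ _ K[X] := Q.map C - (X : K[X]) • Qᵀ.map C
  have hP : ∀ t, (evalRingHom t).mapMatrix P = toMatrix b (B - t • B.flip) := by
    intro t; ext i j; simp [P, Q, mul_comm _ t]
  have hdet : P.det = 0 := Polynomial.funext fun t => by
    rw [← coe_evalRingHom, RingHom.map_det, hP, map_zero]
    exact not_not.1 fun h => hdeg t ((separatingLeft_toMatrix_iff b).1
      (Matrix.separatingLeft_iff_det_ne_zero.2 h))
  obtain ⟨u, hu, hu1⟩ := Matrix.exists_vecMul_eq_zero_and_eval_ne_zero hdet 1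
  let v : K → V := fun t => b.equivFun.symm fun i => (u i).eval t
  have hv : ∀ t, B (v t) = t • B.flip (v t) := by
    intro t
    rw [← sub_eq_zero]
    show (B - t • B.flip) (v t) = 0
    refine apply_basis_equivFun_symm_eq_zero b _ ?_
    ext j
    rw [← hP]
    exact (RingHom.map_vecMul (evalRingHom t) P u j).symm.trans (by simp [hu])
  have hpoly : ∀ t, (u ⬝ᵥ Q.map C *ᵥ u).eval t = B (v t) (v t) :=
    eval_dotProduct_toMatrix_mulVec b B u u
  have hquad : u ⬝ᵥ Q.map C *ᵥ u = 0 := by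
    refine eq_zero_of_infinite_isRoot _ (Set.Infinite.mono (fun t ht => ?_)
      ((Set.toFinite {1, -1}).subset fun t (ht : t * t = 1) => by
        simpa using mul_self_eq_one_iff.1 ht).infinite_compl)
    simpa [IsRoot, hpoly] using apply_eq_zero_of_eq_smul_flip (hv t) (hv t) ht
  have hiso : B (v 1) (v 1) = 0 := by rw [← hpoly 1, hquad, eval_zero]
  obtain ⟨σ, hσ⟩ := Submodule.mem_span_singleton.1 (hsymm (by simpa [sub_eq_zero] using hv 1))
  have hσ0 : σ = 0 := by simpa [← hσ, he] using hiso
  have hv1 : v 1 = 0 := by rw [← hσ, hσ0, zero_smul]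
  exact hu1 (b.equivFun.symm.map_eq_zero_iff.1 hv1)

end LinearMap.BilinForm

section StabOne

variable {A : Type*} [Ring A] [Algebra ℂ A]

noncomputable def mulForm (F : Module.Dual ℂ A) : LinearMap.BilinForm ℂ A :=
  (LinearMap.mul ℂ A).compr₂ F

@[simp]
theorem mulForm_apply (F : Module.Dual ℂ A) (x y : A) : mulForm F x y = F (x * y) := rfl

theorem ker_mulForm_sub_flip (F : Module.Dual ℂ A) :
    LinearMap.ker (mulForm F - (mulForm F).flip) = stabOne F := by
  ext v
  simp [stabOne, LinearMap.ext_iff, sub_eq_zero]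

theorem one_mem_stabOne (F : Module.Dual ℂ A) : (1 : A) ∈ stabOne F := fun x => by
  rw [one_mul, mul_one]

theorem stabOne_eq_span_one_of_finrank_eq_one [Nontrivial A] {F : Module.Dual ℂ A}
    (h : Module.finrank ℂ (stabOne F) = 1) : stabOne F = ℂ ∙ 1 := by
  have := Module.finite_of_finrank_eq_succ h
  exact (Submodule.eq_of_le_of_finrank_eq ((Submodule.span_singleton_le_iff_mem _ _).2
    (one_mem_stabOne F)) (by rw [finrank_span_singleton one_ne_zero, h])).symm

theorem exists_stabOne_eq_span_one_and_apply_one_ne_zero [FiniteDimensional ℂ A] [Nontrivial A]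
    {G : Module.Dual ℂ A} (hG : stabOne G = ℂ ∙ 1) :
    ∃ F : Module.Dual ℂ A, stabOne F = ℂ ∙ 1 ∧ F 1 ≠ 0 := by
  obtain ⟨H, hH⟩ : ∃ H : Module.Dual ℂ A, H 1 ≠ 0 := by
    by_contra! h
    exact one_ne_zero ((Module.forall_dual_apply_eq_zero_iff ℂ (1 : A)).1 h)
  have hle : LinearMap.ker (mulForm G - (mulForm G).flip) ≤
      LinearMap.ker (mulForm H - (mulForm H).flip) := by
    rw [ker_mulForm_sub_flip, ker_mulForm_sub_flip, hG, Submodule.span_singleton_le_iff_mem]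
    exact one_mem_stabOne H
  have hlin : ∀ c : ℂ, mulForm (G + c • H) - (mulForm (G + c • H)).flip =
      (mulForm G - (mulForm G).flip) + c • (mulForm H - (mulForm H).flip) := by
    intro c
    ext x y
    simp only [LinearMap.sub_apply, LinearMap.add_apply, LinearMap.smul_apply,
      LinearMap.BilinForm.flip_apply, mulForm_apply, smul_eq_mul]
    ring
  obtain ⟨c, hker, hc⟩ := ((LinearMap.eventually_ker_add_smul_eq hle).and
    (Set.finite_singleton (-(G 1 / H 1))).compl_mem_cofinite).exists
  refine ⟨G + c • H, ?_, ?_⟩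
  · rw [← ker_mulForm_sub_flip, hlin, hker, ker_mulForm_sub_flip, hG]
  · rw [LinearMap.add_apply, LinearMap.smul_apply, smul_eq_mul]
    intro h
    apply hc
    rw [Set.mem_singleton_iff, eq_neg_iff_add_eq_zero]
    field_simp
    linear_combination h

end StabOne

/-- Let `𝔄` be a finite-dimensional unital associative algebra over `ℂ`
with `ind 𝔄 = 1`, where `ind 𝔄` is the minimum of `dim Stab_G(1)` over all `G ∈ 𝔄*`.
Then `𝔄` is of type 1: there are `F ∈ 𝔄*` and `λ, μ ∈ ℂ` such that the bilinear form
`(x, y) ↦ λ F(x y) + μ F(y x)` on `𝔄` is non-degenerate. -/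
theorem stmt14 {A : Type*} [Ring A] [Algebra ℂ A] [FiniteDimensional ℂ A]
    (hind : IsLeast (Set.range fun G : Module.Dual ℂ A =>
      Module.finrank ℂ ↥(stabOne G)) 1) :
    ∃ (F : Module.Dual ℂ A) (l m : ℂ),
      ∀ v : A, (∀ w : A, l * F (v * w) + m * F (w * v) = 0) → v = 0 := by
  obtain ⟨G, hG⟩ := hind.1
  have : Nontrivial A := Module.nontrivial_of_finrank_pos (R := ℂ)
    ((hG ▸ Nat.one_pos).trans_le (Submodule.finrank_le _))
  obtain ⟨F, hF, hF1⟩ :=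
    exists_stabOne_eq_span_one_and_apply_one_ne_zero (stabOne_eq_span_one_of_finrank_eq_one hG)
  obtain ⟨t, ht⟩ := (mulForm F).exists_separatingLeft_sub_smul_flip
    (ker_mulForm_sub_flip F ▸ hF.le) (by simpa using hF1)
  exact ⟨F, 1, -t, fun v hv => ht v fun w => by simpa [sub_eq_add_neg] using hv w⟩
end

section
/- Let 𝔄 be a finite-dimensional unital associative algebra over ℂ with basis (e_1,…,e_N), let F ∈ 𝔄* be a linear functional, and let g ∈ 𝔄 be invertible. Define the functional G by G(x) := F(g⁻¹ x g), let Ad_g : 𝔄 → 𝔄 be the linear automorphism x ↦ g x g⁻¹, and let A_F, A_G be the N×N matrices with entries F(e_i e_j) and G(e_i e_j) respectively. Then for all λ, μ ∈ ℂ: det(λ A_G + μ A_Gᵀ) = (det Ad_g)⁻² · det(λ A_F + μ A_Fᵀ). -/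
open Matrix in
/-- Let `𝔄` be a finite-dimensional unital associative algebra over `ℂ`
with basis `e`, `F ∈ 𝔄*`, and `g ∈ 𝔄` invertible. Let `G(x) = F(g⁻¹ x g)`,
`Ad_g : x ↦ g x g⁻¹` (a linear map on `𝔄`), and let `A_F`, `A_G` be the matrices
`(F(eᵢ eⱼ))` and `(G(eᵢ eⱼ))`. Then for all `λ, μ`:
`det(λ A_G + μ A_Gᵀ) = (det Ad_g)⁻² ⬝ det(λ A_F + μ A_Fᵀ)`. -/
theorem stmt17 {A : Type*} [Ring A] [Algebra ℂ A] [FiniteDimensional ℂ A]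
    {N : ℕ} (e : Module.Basis (Fin N) ℂ A) (F : Module.Dual ℂ A) (g : Aˣ)
    (Adg : A →ₗ[ℂ] A) (hAdg : ∀ x : A, Adg x = ↑g * x * ↑g⁻¹)
    (AF AG : Matrix (Fin N) (Fin N) ℂ)
    (hAF : AF = Matrix.of fun i j => F (e i * e j))
    (hAG : AG = Matrix.of fun i j => F (↑g⁻¹ * (e i * e j) * ↑g)) :
    ∀ l m : ℂ, (l • AG + m • AGᵀ).det =
      (LinearMap.det Adg)⁻¹ ^ 2 * (l • AF + m • AFᵀ).det := by
  intro l m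
  set B : A →ₗ[ℂ] A :=
    (LinearMap.mulRight ℂ ((g : Aˣ) : A)) ∘ₗ (LinearMap.mulLeft ℂ ((g⁻¹ : Aˣ) : A)) with hB
  have hBapp : ∀ x : A, B x = ↑g⁻¹ * x * ↑g := fun x => rfl
  set P : Matrix (Fin N) (Fin N) ℂ := LinearMap.toMatrix e e B with hP
  have hcomp : B ∘ₗ Adg = LinearMap.id := by
    ext x
    simp [hBapp, hAdg, ← mul_assoc]
  have hdet : LinearMap.det B * LinearMap.det Adg = 1 := by
    rw [← LinearMap.det_comp, hcomp, LinearMap.det_id]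
  have hdetB : LinearMap.det B = (LinearMap.det Adg)⁻¹ :=
    eq_inv_of_mul_eq_one_left hdet
  have hdetP : P.det = (LinearMap.det Adg)⁻¹ := by
    rw [hP, ← hdetB, ← LinearMap.det_toMatrix e]
  have hBe : ∀ j, B (e j) = ∑ k, P k j • e k := by
    intro j
    conv_lhs => rw [← e.sum_repr (B (e j))]
    simp [hP, LinearMap.toMatrix_apply]
  have key : AG = Pᵀ * AF * P := by
    ext i j
    have h1 : (↑g⁻¹ * (e i * e j) * ↑g : A) = B (e i) * B (e j) := by
      simp only [hBapp]
      rw [mul_assoc (↑g⁻¹ * e i) (↑g) (↑g⁻¹ * e j * ↑g)]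
      rw [← mul_assoc (↑g : A) (↑g⁻¹ * e j) (↑g), ← mul_assoc (↑g : A) (↑g⁻¹) (e j)]
      simp [mul_assoc]
    rw [hAG, hAF]
    simp only [Matrix.of_apply]
    rw [h1, hBe i, hBe j, Finset.sum_mul_sum]
    simp only [Matrix.mul_apply, Matrix.transpose_apply, Matrix.of_apply,
      smul_mul_smul_comm, map_sum, _root_.map_smul, smul_eq_mul, Finset.sum_mul,
      Finset.mul_sum]
    rw [Finset.sum_comm]
    apply Finset.sum_congr rfl
    intro k _
    apply Finset.sum_congr rfl
    intro l' _
    ring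
  have hsum : l • AG + m • AGᵀ = Pᵀ * (l • AF + m • AFᵀ) * P := by
    rw [key]
    simp [Matrix.mul_add, Matrix.add_mul, Matrix.mul_smul, Matrix.smul_mul,
      Matrix.transpose_mul, Matrix.mul_assoc]
  rw [hsum, Matrix.det_mul, Matrix.det_mul, Matrix.det_transpose, hdetP]
  ring
end

section
/- Let k be an algebraically closed field, let A, B be n×n matrices over k and C, D be m×m matrices over k, and suppose α_1, …, α_n, β_1, …, β_n ∈ k are such that det(λ A + μ B) = ∏_{i=1}^n (α_i λ + β_i μ) as polynomials in the variables λ, μ. Then, as polynomials in λ, μ: det(λ (A ⊗ C) + μ (B ⊗ D)) = ∏_{i=1}^n det(α_i λ C + β_i μ D), where ⊗ denotes the Kronecker product of matrices. -/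
/-!
If `v ≠ 0` and `w ≠ 0` satisfy `A v = a w` and `B v = b w`, a change of bases sending `v` and `w`
to the first basis vectors makes `λA + μB` block upper triangular with first diagonal block
`aλ + bμ`, and `λ(A ⊗ C) + μ(B ⊗ D)` block upper triangular with first diagonal block
`aλC + bμD`. For a regular pencil such `v, w` exist for `(a, b) = (α₀, β₀)`, because `(β₀, -α₀)`
is a root of `det(λA + μB)`; so induction on `n` peels off one factor `αᵢλ + βᵢμ` at a time on
both sides. For a singular pencil the same reduction with `(a, b) = (0, 1)`, starting from a
kernel vector `v` of `A`, keeps the pencil singular, unless `Bv = 0` too, and then `v ⊗ 𝟙` is a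
common kernel vector of `A ⊗ C` and `B ⊗ D`.
-/

open MvPolynomial Kronecker

theorem exists_smul_eq_of_smul_eq_smul {k V : Type*} [Field k] [AddCommGroup V] [Module k V]
    {a b : k} (hab : a ≠ 0 ∨ b ≠ 0) {x y : V} (h : b • x = a • y) :
    ∃ w : V, x = a • w ∧ y = b • w := by
  rcases hab with ha | hb
  · refine ⟨a⁻¹ • x, by rw [smul_inv_smul₀ ha], ?_⟩
    rw [smul_comm, h, inv_smul_smul₀ ha]
  · refine ⟨b⁻¹ • y, ?_, by rw [smul_inv_smul₀ hb]⟩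
    rw [smul_comm, ← h, inv_smul_smul₀ hb]

theorem MvPolynomial.C_mul_X_add_C_mul_X_eq_zero_iff {k : Type*} [CommRing k] {a b : k} :
    (C a * X 0 + C b * X 1 : MvPolynomial (Fin 2) k) = 0 ↔ a = 0 ∧ b = 0 := by
  refine ⟨fun h => ⟨?_, ?_⟩, fun ⟨ha, hb⟩ => by simp [ha, hb]⟩
  · simpa using congrArg (eval ![1, 0]) h
  · simpa using congrArg (eval ![0, 1]) h

namespace Matrix

section CommRing

variable {R : Type*} [CommRing R] {ι : Type*}

/-- The pencil `λA + μB`, with `λ = X 0` and `μ = X 1`. -/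
noncomputable def pencil (A B : Matrix ι ι R) : Matrix ι ι (MvPolynomial (Fin 2) R) :=
  (X 0 : MvPolynomial (Fin 2) R) • A.map C + (X 1 : MvPolynomial (Fin 2) R) • B.map C

theorem pencil_apply (A B : Matrix ι ι R) (i j : ι) :
    pencil A B i j = X 0 * C (A i j) + X 1 * C (B i j) := rfl

theorem pencil_smul_smul (a b : R) (A B : Matrix ι ι R) :
    pencil (a • A) (b • B) =
      (C a * X 0 : MvPolynomial (Fin 2) R) • A.map C +
        (C b * X 1 : MvPolynomial (Fin 2) R) • B.map C := by
  ext i j : 1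
  simp only [pencil_apply, add_apply, smul_apply, map_apply, smul_eq_mul, _root_.map_mul]
  ring

theorem eval_det_pencil [Fintype ι] [DecidableEq ι] (A B : Matrix ι ι R) (p : Fin 2 → R) :
    eval p (pencil A B).det = (p 0 • A + p 1 • B).det := by
  rw [RingHom.map_det]
  congr 1
  ext i j
  simp [pencil_apply, mul_comm]

theorem det_pencil_mul_mul [Fintype ι] [DecidableEq ι] (P Q A B : Matrix ι ι R) :
    (pencil (P * A * Q) (P * B * Q)).det = C (P.det * Q.det) * (pencil A B).det := by
  have : pencil (P * A * Q) (P * B * Q) = P.map C * pencil A B * Q.map C := by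
    simp only [pencil, Matrix.map_mul, Matrix.mul_add, Matrix.add_mul, Matrix.mul_smul,
      Matrix.smul_mul]
  rw [this, det_mul, det_mul, _root_.map_mul, ← RingHom.mapMatrix_apply, ← RingHom.mapMatrix_apply,
    ← RingHom.map_det, ← RingHom.map_det]
  ring

theorem det_pencil_eq_zero_of_mulVec_eq_zero [Fintype ι] [DecidableEq ι] [IsDomain R]
    {A B : Matrix ι ι R} {v : ι → R} (hv : v ≠ 0) (hA : A *ᵥ v = 0) (hB : B *ᵥ v = 0) :
    (pencil A B).det = 0 := by
  refine exists_mulVec_eq_zero_iff.mp ⟨C ∘ v, fun h => hv ?_, ?_⟩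
  · exact _root_.funext fun i => C_injective (Fin 2) R (by simpa using congrFun h i)
  · ext i
    simp only [pencil, add_mulVec, smul_mulVec, Pi.add_apply, Pi.smul_apply,
      ← RingHom.map_mulVec, hA, hB, Pi.zero_apply, map_zero, smul_zero, add_zero]

theorem kronecker_mulVec_vec_vecMulVec [Fintype ι] {κ : Type*} [Fintype κ] (A : Matrix ι ι R)
    (E : Matrix κ κ R) (u : κ → R) (v : ι → R) :
    (A ⊗ₖ E) *ᵥ vec (vecMulVec u v) = vec (vecMulVec (E *ᵥ u) (A *ᵥ v)) := by
  rw [kronecker_mulVec_vec, mul_vecMulVec, vecMulVec_mul, vecMul_transpose]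

theorem det_eq_mul_det_of_succ_zero_eq_zero {n : ℕ} {κ : Type*} [Fintype κ] [DecidableEq κ]
    (M : Matrix (Fin (n + 1) × κ) (Fin (n + 1) × κ) R)
    (hM : ∀ (i : Fin n) s t, M (i.succ, s) (0, t) = 0) :
    M.det = (M.submatrix (Prod.mk 0) (Prod.mk 0)).det *
      (M.submatrix (Prod.map Fin.succ id) (Prod.map Fin.succ id)).det := by
  let e : κ ⊕ Fin n × κ ≃ Fin (n + 1) × κ :=
    (((finSuccEquiv n).prodCongr (Equiv.refl κ)).trans optionProdEquiv).symm
  have he : M.submatrix e e = fromBlocks (M.submatrix (Prod.mk 0) (Prod.mk 0))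
      (M.submatrix (Prod.mk 0) (Prod.map Fin.succ id)) 0
      (M.submatrix (Prod.map Fin.succ id) (Prod.map Fin.succ id)) := by
    ext (s | ⟨i, s⟩) (t | ⟨j, t⟩) <;> simp [e, hM]
  rw [← det_submatrix_equiv_self e, he, det_fromBlocks_zero₂₁]

theorem pencil_submatrix {κ : Type*} (A B : Matrix ι ι R) (f g : κ → ι) :
    (pencil A B).submatrix f g = pencil (A.submatrix f g) (B.submatrix f g) := rfl

theorem apply_zero_of_mulVec_single {n : ℕ} {A : Matrix (Fin (n + 1)) (Fin (n + 1)) R} {a : R}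
    (h : A *ᵥ Pi.single 0 1 = a • Pi.single 0 1) : A 0 0 = a ∧ ∀ i : Fin n, A i.succ 0 = 0 :=
  ⟨by simpa using congrFun h 0, fun i => by simpa using congrFun h i.succ⟩

theorem det_pencil_of_mulVec_single {n : ℕ} {A B : Matrix (Fin (n + 1)) (Fin (n + 1)) R}
    {a b : R} (hA : A *ᵥ Pi.single 0 1 = a • Pi.single 0 1)
    (hB : B *ᵥ Pi.single 0 1 = b • Pi.single 0 1) :
    (pencil A B).det = (C a * X 0 + C b * X 1) *
      (pencil (A.submatrix Fin.succ Fin.succ) (B.submatrix Fin.succ Fin.succ)).det := by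
  obtain ⟨hA0, hAs⟩ := apply_zero_of_mulVec_single hA
  obtain ⟨hB0, hBs⟩ := apply_zero_of_mulVec_single hB
  rw [det_succ_column_zero, Fin.sum_univ_succ, Finset.sum_eq_zero fun i _ => by
    simp [pencil_apply, hAs, hBs]]
  simp [pencil_apply, pencil_submatrix, hA0, hB0, mul_comm]

theorem det_pencil_kronecker_of_mulVec_single {n : ℕ} {κ : Type*} [Fintype κ] [DecidableEq κ]
    {A B : Matrix (Fin (n + 1)) (Fin (n + 1)) R} {a b : R}
    (hA : A *ᵥ Pi.single 0 1 = a • Pi.single 0 1)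
    (hB : B *ᵥ Pi.single 0 1 = b • Pi.single 0 1) (E F : Matrix κ κ R) :
    (pencil (A ⊗ₖ E) (B ⊗ₖ F)).det = (pencil (a • E) (b • F)).det *
      (pencil (A.submatrix Fin.succ Fin.succ ⊗ₖ E) (B.submatrix Fin.succ Fin.succ ⊗ₖ F)).det := by
  obtain ⟨hA0, hAs⟩ := apply_zero_of_mulVec_single hA
  obtain ⟨hB0, hBs⟩ := apply_zero_of_mulVec_single hB
  rw [det_eq_mul_det_of_succ_zero_eq_zero _ fun i s t => by simp [pencil_apply, hAs, hBs]]
  congr 2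
  ext s t : 1
  simp [pencil_apply, hA0, hB0]

end CommRing

section Field

variable {k : Type*} [Field k] {κ : Type*} [Fintype κ] [DecidableEq κ]

theorem exists_isUnit_det_mulVec_single_eq {ι : Type*} [Fintype ι] [DecidableEq ι] (i : ι)
    {v : ι → k} (hv : v ≠ 0) : ∃ Q : Matrix ι ι k, IsUnit Q.det ∧ Q *ᵥ Pi.single i 1 = v := by
  obtain ⟨j, hj⟩ : ∃ j, v j ≠ 0 := Function.ne_iff.mp hv
  refine ⟨((1 : Matrix ι ι k).updateCol j v).submatrix id (Equiv.swap i j), ?_, ?_⟩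
  · rw [isUnit_iff_ne_zero, det_permute', ← cramer_apply, cramer_one]
    rcases Int.units_eq_one_or (Equiv.Perm.sign (Equiv.swap i j)) with h | h <;> simpa [h]
  · ext l
    simp

theorem exists_isUnit_det_mulVec_eq_single {ι : Type*} [Fintype ι] [DecidableEq ι] (i : ι)
    {w : ι → k} (hw : w ≠ 0) : ∃ P : Matrix ι ι k, IsUnit P.det ∧ P *ᵥ w = Pi.single i 1 := by
  obtain ⟨Q, hQ, hQw⟩ := exists_isUnit_det_mulVec_single_eq i hw
  refine ⟨Q⁻¹, isUnit_nonsing_inv_det Q hQ, ?_⟩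
  rw [← hQw, mulVec_mulVec, nonsing_inv_mul Q hQ, one_mulVec]

theorem exists_mulVec_eq_smul_of_dvd_det_pencil {ι : Type*} [Fintype ι] [DecidableEq ι]
    {A B : Matrix ι ι k} {a b : k} (hdvd : C a * X 0 + C b * X 1 ∣ (pencil A B).det)
    (h0 : (pencil A B).det ≠ 0) :
    ∃ v w : ι → k, v ≠ 0 ∧ w ≠ 0 ∧ A *ᵥ v = a • w ∧ B *ᵥ v = b • w := by
  have hab : a ≠ 0 ∨ b ≠ 0 := not_and_or.mp fun ⟨ha, hb⟩ => h0 (by simpa [ha, hb] using hdvd)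
  -- `(b, -a)` is a root of the factor, hence of the determinant.
  have hroot : (b • A + (-a) • B).det = 0 := by
    obtain ⟨q, hq⟩ := hdvd
    have := eval_det_pencil A B ![b, -a]
    simp only [hq, _root_.map_mul, map_add, eval_C, eval_X] at this
    simpa [mul_comm b a] using this.symm
  obtain ⟨v, hv, hv0⟩ := exists_mulVec_eq_zero_iff.mpr hroot
  obtain ⟨w, hAw, hBw⟩ := exists_smul_eq_of_smul_eq_smul hab (show b • (A *ᵥ v) = a • (B *ᵥ v) by
    rwa [add_mulVec, smul_mulVec, smul_mulVec, neg_smul, add_neg_eq_zero] at hv0)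
  refine ⟨v, w, hv, ?_, hAw, hBw⟩
  rintro rfl
  exact h0 (det_pencil_eq_zero_of_mulVec_eq_zero hv (by simpa using hAw) (by simpa using hBw))

theorem exists_det_pencil_factor_of_mulVec_eq_smul (E F : Matrix κ κ k) {n : ℕ}
    {A B : Matrix (Fin (n + 1)) (Fin (n + 1)) k} {a b : k} {v w : Fin (n + 1) → k}
    (hv : v ≠ 0) (hw : w ≠ 0) (hA : A *ᵥ v = a • w) (hB : B *ᵥ v = b • w) :
    ∃ (A₁ B₁ : Matrix (Fin n) (Fin n) k) (u : k), u ≠ 0 ∧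
      C u * (pencil A B).det = (C a * X 0 + C b * X 1) * (pencil A₁ B₁).det ∧
      C (u ^ Fintype.card κ) * (pencil (A ⊗ₖ E) (B ⊗ₖ F)).det =
        (pencil (a • E) (b • F)).det * (pencil (A₁ ⊗ₖ E) (B₁ ⊗ₖ F)).det := by
  obtain ⟨Q, hQ, hQv⟩ := exists_isUnit_det_mulVec_single_eq 0 hv
  obtain ⟨P, hP, hPw⟩ := exists_isUnit_det_mulVec_eq_single 0 hw
  have hsingle : ∀ (M : Matrix (Fin (n + 1)) (Fin (n + 1)) k) (c : k), M *ᵥ v = c • w →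
      (P * M * Q) *ᵥ Pi.single 0 1 = c • Pi.single 0 1 := fun M c hM => by
    rw [← mulVec_mulVec, hQv, ← mulVec_mulVec, hM, mulVec_smul, hPw]
  have hkron : ∀ (M : Matrix (Fin (n + 1)) (Fin (n + 1)) k) (G : Matrix κ κ k),
      (P * M * Q) ⊗ₖ G = (P ⊗ₖ 1) * (M ⊗ₖ G) * (Q ⊗ₖ 1) := fun M G => by
    rw [← mul_kronecker_mul, ← mul_kronecker_mul, Matrix.mul_one, Matrix.one_mul]
  refine ⟨(P * A * Q).submatrix Fin.succ Fin.succ, (P * B * Q).submatrix Fin.succ Fin.succ,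
    P.det * Q.det, mul_ne_zero hP.ne_zero hQ.ne_zero, ?_, ?_⟩
  · rw [← det_pencil_mul_mul, det_pencil_of_mulVec_single (hsingle A a hA) (hsingle B b hB)]
  · rw [← det_pencil_kronecker_of_mulVec_single (hsingle A a hA) (hsingle B b hB), hkron, hkron,
      det_pencil_mul_mul, det_kronecker, det_kronecker]
    simp [mul_pow]

theorem det_pencil_kronecker_eq_zero [Nonempty κ] (E F : Matrix κ κ k) {n : ℕ}
    {A B : Matrix (Fin n) (Fin n) k} (h : (pencil A B).det = 0) :
    (pencil (A ⊗ₖ E) (B ⊗ₖ F)).det = 0 := by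
  induction n with
  | zero => simp at h
  | succ n ih =>
    have hA : A.det = 0 := by simpa [h] using (eval_det_pencil A B ![1, 0]).symm
    obtain ⟨v, hv, hAv⟩ := exists_mulVec_eq_zero_iff.mpr hA
    by_cases hBv : B *ᵥ v = 0
    · refine det_pencil_eq_zero_of_mulVec_eq_zero (v := vec (vecMulVec (fun _ : κ => 1) v))
        ?_ ?_ ?_
      · obtain ⟨j, hj⟩ := Function.ne_iff.mp hv
        exact Function.ne_iff.mpr
          ⟨(j, Classical.arbitrary κ), by simpa [vec, vecMulVec_apply] using hj⟩
      · ext; simp [kronecker_mulVec_vec_vecMulVec, hAv, vec, vecMulVec_apply]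
      · ext; simp [kronecker_mulVec_vec_vecMulVec, hBv, vec, vecMulVec_apply]
    · obtain ⟨A₁, B₁, u, hu, h₁, h₂⟩ := exists_det_pencil_factor_of_mulVec_eq_smul E F
        (a := 0) (b := 1) hv hBv (by rw [hAv, zero_smul]) (by rw [one_smul])
      have h₁' : (pencil A₁ B₁).det = 0 := by simpa [h, X_ne_zero] using h₁.symm
      rw [ih h₁', mul_zero] at h₂
      simpa [hu] using h₂

theorem det_pencil_kronecker_of_det_pencil_eq_prod [Nonempty κ] (E F : Matrix κ κ k) {n : ℕ}
    {A B : Matrix (Fin n) (Fin n) k} {α β : Fin n → k} {c : k}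
    (h : (pencil A B).det = C c * ∏ i, (C (α i) * X 0 + C (β i) * X 1)) :
    (pencil (A ⊗ₖ E) (B ⊗ₖ F)).det =
      C (c ^ Fintype.card κ) * ∏ i, (pencil (α i • E) (β i • F)).det := by
  -- `c` absorbs the determinants of the changes of bases made along the induction.
  induction n generalizing c with
  | zero =>
    obtain rfl : c = 1 := C_injective (Fin 2) k (by simpa using h.symm)
    simp
  | succ n ih =>
    by_cases h0 : (pencil A B).det = 0
    · rw [det_pencil_kronecker_eq_zero E F h0, eq_comm]
      rw [h0, eq_comm, mul_eq_zero, C_eq_zero, Finset.prod_eq_zero_iff] at h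
      rcases h with rfl | ⟨j, -, hj⟩
      · simp [zero_pow Fintype.card_ne_zero]
      · obtain ⟨hαj, hβj⟩ := C_mul_X_add_C_mul_X_eq_zero_iff.mp hj
        exact mul_eq_zero_of_right _
          (Finset.prod_eq_zero (Finset.mem_univ j) (by simp [hαj, hβj, pencil]))
    · have hdvd : C (α 0) * X 0 + C (β 0) * X 1 ∣ (pencil A B).det :=
        h ▸ dvd_mul_of_dvd_right (Finset.dvd_prod_of_mem _ (Finset.mem_univ 0)) _
      obtain ⟨v, w, hv, hw, hAw, hBw⟩ := exists_mulVec_eq_smul_of_dvd_det_pencil hdvd h0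
      obtain ⟨A₁, B₁, u, hu, h₁, h₂⟩ := exists_det_pencil_factor_of_mulVec_eq_smul E F hv hw hAw hBw
      have h₁' : (pencil A₁ B₁).det =
          C (u * c) * ∏ i : Fin n, (C (α i.succ) * X 0 + C (β i.succ) * X 1) := by
        refine mul_left_cancel₀ (ne_zero_of_dvd_ne_zero h0 hdvd) ?_
        rw [← h₁, h, Fin.prod_univ_succ, C_mul]
        ring
      rw [ih h₁'] at h₂
      refine mul_left_cancel₀ (C_ne_zero.mpr (pow_ne_zero (Fintype.card κ) hu)) ?_
      rw [h₂, Fin.prod_univ_succ, mul_pow, C_mul]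
      ring

end Field

end Matrix

open Matrix MvPolynomial Kronecker in
theorem stmt19_general {k : Type*} [Field k] {n m : ℕ}
    (A B : Matrix (Fin n) (Fin n) k) (C D : Matrix (Fin m) (Fin m) k)
    (α β : Fin n → k)
    (h : Matrix.det ((X 0 : MvPolynomial (Fin 2) k) •
          A.map (MvPolynomial.C : k →+* MvPolynomial (Fin 2) k) +
        (X 1 : MvPolynomial (Fin 2) k) •
          B.map (MvPolynomial.C : k →+* MvPolynomial (Fin 2) k)) =
      ∏ i, (MvPolynomial.C (α i) * X 0 + MvPolynomial.C (β i) * X 1)) :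
    Matrix.det ((X 0 : MvPolynomial (Fin 2) k) •
          (A ⊗ₖ C).map (MvPolynomial.C : k →+* MvPolynomial (Fin 2) k) +
        (X 1 : MvPolynomial (Fin 2) k) •
          (B ⊗ₖ D).map (MvPolynomial.C : k →+* MvPolynomial (Fin 2) k)) =
      ∏ i, Matrix.det (((MvPolynomial.C (α i) * X 0 : MvPolynomial (Fin 2) k)) •
            C.map (MvPolynomial.C : k →+* MvPolynomial (Fin 2) k) +
          ((MvPolynomial.C (β i) * X 1 : MvPolynomial (Fin 2) k)) •
            D.map (MvPolynomial.C : k →+* MvPolynomial (Fin 2) k)) := by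
  rcases isEmpty_or_nonempty (Fin m) with _ | _
  · simp
  · have h₁ : (pencil A B).det = MvPolynomial.C 1 * ∏ i, (MvPolynomial.C (α i) * X 0 +
        MvPolynomial.C (β i) * X 1) := by
      rwa [map_one, one_mul]
    have h₂ := det_pencil_kronecker_of_det_pencil_eq_prod C D h₁
    simp only [one_pow, map_one, one_mul, pencil_smul_smul] at h₂
    exact h₂

open Matrix MvPolynomial Kronecker in
/-- (Extended Cayley theorem) Let `k` be an algebraically closed field,
`A, B` be `n×n` matrices and `C, D` be `m×m` matrices over `k`, and suppose
`det(λ A + μ B) = ∏ᵢ (αᵢ λ + βᵢ μ)` as polynomials in `λ = X 0`, `μ = X 1`. Then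
`det(λ (A ⊗ C) + μ (B ⊗ D)) = ∏ᵢ det(αᵢ λ C + βᵢ μ D)`, where `⊗` is the Kronecker
product. -/
theorem stmt19 {k : Type*} [Field k] [IsAlgClosed k] {n m : ℕ}
    (A B : Matrix (Fin n) (Fin n) k) (C D : Matrix (Fin m) (Fin m) k)
    (α β : Fin n → k)
    (h : Matrix.det ((X 0 : MvPolynomial (Fin 2) k) •
          A.map (MvPolynomial.C : k →+* MvPolynomial (Fin 2) k) +
        (X 1 : MvPolynomial (Fin 2) k) •
          B.map (MvPolynomial.C : k →+* MvPolynomial (Fin 2) k)) =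
      ∏ i, (MvPolynomial.C (α i) * X 0 + MvPolynomial.C (β i) * X 1)) :
    Matrix.det ((X 0 : MvPolynomial (Fin 2) k) •
          (A ⊗ₖ C).map (MvPolynomial.C : k →+* MvPolynomial (Fin 2) k) +
        (X 1 : MvPolynomial (Fin 2) k) •
          (B ⊗ₖ D).map (MvPolynomial.C : k →+* MvPolynomial (Fin 2) k)) =
      ∏ i, Matrix.det (((MvPolynomial.C (α i) * X 0 : MvPolynomial (Fin 2) k)) •
            C.map (MvPolynomial.C : k →+* MvPolynomial (Fin 2) k) +
          ((MvPolynomial.C (β i) * X 1 : MvPolynomial (Fin 2) k)) •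
            D.map (MvPolynomial.C : k →+* MvPolynomial (Fin 2) k)) :=
  stmt19_general A B C D α β h
end
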